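/- arXiv:1410.5917 — 3 statements merged into one kernel-verified Lean document; each statement's English description precedes it below -/
import Mathlib

section
/- For every integer m ≥ 2, the group presented on generators {x₁, x₂, x₃} with relators x₁^{m−1}x₃^{−1}x₂^{−1}, x₂x₁^{−1}x₃^{−1} and x₃x₂^{−1}x₁^{−1} is isomorphic to the generalized quaternion (dicyclic) group Q_{4m} of order 4m, i.e., to the group ⟨x₁, x₂ | x₁^{2m} = x₂⁴ = 1, x₁^m = x₂², x₂^{−1}x₁x₂ = x₁^{−1}⟩ (Mathlib's QuaternionGroup m). -/
/-- The relators `x₁^{m-1} x₃⁻¹ x₂⁻¹`, `x₂ x₁⁻¹ x₃⁻¹`, `x₃ x₂⁻¹ x₁⁻¹` in the free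
group on three generators. -/
def q4mRels (m : ℕ) : Set (FreeGroup (Fin 3)) :=
  { (FreeGroup.of 0) ^ (m - 1) * (FreeGroup.of 2)⁻¹ * (FreeGroup.of 1)⁻¹,
    FreeGroup.of 1 * (FreeGroup.of 0)⁻¹ * (FreeGroup.of 2)⁻¹,
    FreeGroup.of 2 * (FreeGroup.of 1)⁻¹ * (FreeGroup.of 0)⁻¹ }

namespace Q4mAux

variable (m : ℕ)

abbrev P (m : ℕ) := PresentedGroup (q4mRels m)

def A : P m := PresentedGroup.of 0
def B : P m := PresentedGroup.of 1
def C : P m := PresentedGroup.of 2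

lemma rel_eq_one {r : FreeGroup (Fin 3)} (hr : r ∈ q4mRels m) :
    (QuotientGroup.mk r : P m) = 1 :=
  (QuotientGroup.eq_one_iff r).mpr (Subgroup.subset_normalClosure hr)

lemma rel1 : (A m) ^ (m - 1) = B m * C m := by
  have h : (A m) ^ (m-1) * (C m)⁻¹ * (B m)⁻¹ = 1 :=
    rel_eq_one m (r := (FreeGroup.of 0) ^ (m - 1) * (FreeGroup.of 2)⁻¹ * (FreeGroup.of 1)⁻¹)
      (by simp [q4mRels])
  have := mul_eq_one_iff_eq_inv.mp h
  rw [inv_inv] at this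
  rw [mul_inv_eq_iff_eq_mul.mp this]

lemma rel2 : B m = C m * A m := by
  have h : (B m) * (A m)⁻¹ * (C m)⁻¹ = 1 :=
    rel_eq_one m (r := FreeGroup.of 1 * (FreeGroup.of 0)⁻¹ * (FreeGroup.of 2)⁻¹)
      (by simp [q4mRels])
  have := mul_eq_one_iff_eq_inv.mp h
  rw [inv_inv] at this
  rw [mul_inv_eq_iff_eq_mul.mp this]

lemma rel3 : C m = A m * B m := by
  have h : (C m) * (B m)⁻¹ * (A m)⁻¹ = 1 :=
    rel_eq_one m (r := FreeGroup.of 2 * (FreeGroup.of 1)⁻¹ * (FreeGroup.of 0)⁻¹)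
      (by simp [q4mRels])
  have := mul_eq_one_iff_eq_inv.mp h
  rw [inv_inv] at this
  rw [mul_inv_eq_iff_eq_mul.mp this]

lemma key1 : A m * B m = B m * (A m)⁻¹ := by
  have h : B m = A m * B m * A m := by rw [← rel3]; exact rel2 m
  conv_rhs => rw [h]
  group

lemma keyk (k : ℕ) : (A m) ^ k * B m = B m * ((A m) ^ k)⁻¹ := by
  induction k with
  | zero => simp
  | succ n ih =>
    rw [pow_succ, mul_assoc, key1, ← mul_assoc, ih]
    group

variable (hm : 2 ≤ m)
include hm

lemma key2 : B m * B m = (A m) ^ m := by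
  have h : (A m) ^ (m-1) = B m * B m * (A m)⁻¹ := by
    rw [rel1, rel3, ← mul_assoc, mul_assoc (B m), key1]
    group
  have : (A m) ^ (m-1) * A m = B m * B m := by rw [h]; group
  rw [← this, ← pow_succ]
  congr 1
  omega

lemma key4 : (A m) ^ (2 * m) = 1 := by
  have h := keyk m m
  rw [← key2 m hm] at h
  -- B²·B = B·(B²)⁻¹
  have hb4 : B m ^ 4 = 1 := by
    have h3 : B m ^ 4 = (B m * B m * B m) * B m := by rw [pow_succ, pow_succ, pow_two]
    rw [h3, h]; group
  calc (A m) ^ (2*m) = ((A m) ^ m) ^ 2 := by rw [← pow_mul]; ring_nf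
    _ = (B m * B m) ^ 2 := by rw [key2 m hm]
    _ = B m ^ 4 := by rw [← pow_two, ← pow_mul]
    _ = 1 := hb4


def pi (i : ZMod (2 * m)) : P m := (A m) ^ i.val

omit hm in
lemma pi_def (i : ZMod (2 * m)) : pi m i = (A m) ^ i.val := rfl

lemma pow_mod (k : ℕ) : (A m) ^ (k % (2 * m)) = (A m) ^ k := by
  conv_rhs => rw [← Nat.div_add_mod k (2 * m)]
  rw [pow_add, pow_mul, key4 m hm, one_pow, one_mul]

lemma pi_add (i j : ZMod (2 * m)) : pi m (i + j) = pi m i * pi m j := by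
  haveI : NeZero (2 * m) := ⟨by omega⟩
  rw [pi_def, ZMod.val_add, pow_mod m hm, pow_add]
  rfl

omit hm in
lemma pi_zero : pi m 0 = 1 := by
  simp [pi_def]

lemma pi_neg (i : ZMod (2 * m)) : pi m (-i) = (pi m i)⁻¹ := by
  have h := pi_add m hm (-i) i
  rw [neg_add_cancel, pi_zero] at h
  exact eq_inv_of_mul_eq_one_left h.symm

lemma pi_sub' (i j : ZMod (2 * m)) : pi m (i - j) = (pi m j)⁻¹ * pi m i := by
  rw [sub_eq_add_neg, add_comm, pi_add m hm, pi_neg m hm]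

omit hm in
lemma pi_B (i : ZMod (2 * m)) : pi m i * B m = B m * (pi m i)⁻¹ := keyk m i.val

lemma pi_one : pi m 1 = A m := by
  have h1 : (1 : ZMod (2 * m)) = ((1 : ℕ) : ZMod (2 * m)) := by norm_cast
  rw [pi_def, h1, ZMod.val_cast_of_lt (by omega), pow_one]

lemma pi_natCast (k : ℕ) : pi m ((k : ℕ) : ZMod (2 * m)) = (A m) ^ k := by
  haveI : NeZero (2 * m) := ⟨by omega⟩
  rw [pi_def, ZMod.val_natCast, pow_mod m hm]

def psiFun : QuaternionGroup m → P m
  | .a i => pi m i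
  | .xa i => B m * pi m i

lemma psi_mul (x y : QuaternionGroup m) :
    psiFun m (x * y) = psiFun m x * psiFun m y := by
  rcases x with i | i <;> rcases y with j | j
  · show pi m (i + j) = pi m i * pi m j
    exact pi_add m hm i j
  · show B m * pi m (j - i) = pi m i * (B m * pi m j)
    rw [pi_sub' m hm, ← mul_assoc, ← mul_assoc, pi_B]
  · show B m * pi m (i + j) = B m * pi m i * pi m j
    rw [pi_add m hm, mul_assoc]
  · show pi m ((m : ZMod (2 * m)) + j - i) = (B m * pi m i) * (B m * pi m j)
    have : (m : ZMod (2 * m)) + j - i = (m : ZMod (2 * m)) + (j - i) := by ring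
    rw [this, pi_add m hm, pi_natCast m hm, pi_sub' m hm, ← key2 m hm]
    calc B m * B m * ((pi m i)⁻¹ * pi m j)
        = B m * (B m * (pi m i)⁻¹) * pi m j := by group
      _ = B m * (pi m i * B m) * pi m j := by rw [pi_B]
      _ = (B m * pi m i) * (B m * pi m j) := by group

def psi : QuaternionGroup m →* P m := MonoidHom.mk' (psiFun m) (psi_mul m hm)

end Q4mAux

namespace Q4mAux
variable (m : ℕ)

def f : Fin 3 → QuaternionGroup m := ![.a 1, .xa 0, .xa (-1)]

lemma xa_inv (i : ZMod (2 * m)) : (QuaternionGroup.xa i : QuaternionGroup m)⁻¹ = .xa (m + i) := rfl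
lemma a_inv (i : ZMod (2 * m)) : (QuaternionGroup.a i : QuaternionGroup m)⁻¹ = .a (-i) := rfl

variable (hm : 2 ≤ m)
include hm

lemma hf : ∀ r ∈ q4mRels m, FreeGroup.lift (f m) r = 1 := by
  have h2m : ((2 * m : ℕ) : ZMod (2 * m)) = 0 := ZMod.natCast_self _
  have hc : ((m - 1 : ℕ) : ZMod (2 * m)) = (m : ZMod (2 * m)) - 1 := by
    push_cast [Nat.cast_sub (by omega : 1 ≤ m)]; ring
  intro r hr
  rcases hr with rfl | rfl | rfl <;>
    simp only [map_mul, map_pow, map_inv, FreeGroup.lift_apply_of, f, Matrix.cons_val_zero,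
      Matrix.cons_val_one, Matrix.head_cons, Matrix.cons_val_two, Matrix.tail_cons,
      QuaternionGroup.a_one_pow, xa_inv, a_inv, QuaternionGroup.a_mul_xa,
      QuaternionGroup.xa_mul_xa, QuaternionGroup.xa_mul_a, QuaternionGroup.a_mul_a, hc]
  · rw [QuaternionGroup.one_def]
    congr 1
    push_cast at h2m ⊢
    linear_combination h2m
  · rw [QuaternionGroup.one_def]
    congr 1
    push_cast at h2m ⊢
    linear_combination h2m
  · rw [QuaternionGroup.one_def]
    congr 1
    push_cast at h2m ⊢
    linear_combination h2m

def phi : P m →* QuaternionGroup m := PresentedGroup.toGroup (hf m hm)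

end Q4mAux

namespace Q4mAux
variable (m : ℕ) (hm : 2 ≤ m)

lemma phi_of (i : Fin 3) : phi m hm (PresentedGroup.of i) = f m i :=
  PresentedGroup.toGroup.of (hf m hm)

lemma h1 : (psi m hm).comp (phi m hm) = MonoidHom.id (P m) := by
  ext x
  fin_cases x
  · show psi m hm (phi m hm (PresentedGroup.of 0)) = PresentedGroup.of 0
    rw [phi_of]
    show psiFun m (.a 1) = A m
    show pi m 1 = A m
    exact pi_one m hm
  · show psi m hm (phi m hm (PresentedGroup.of 1)) = PresentedGroup.of 1
    rw [phi_of]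
    show B m * pi m 0 = B m
    rw [pi_zero, mul_one]
  · show psi m hm (phi m hm (PresentedGroup.of 2)) = PresentedGroup.of 2
    rw [phi_of]
    show B m * pi m (-1) = C m
    rw [pi_neg m hm, pi_one m hm, rel3, key1]

lemma phi_A : phi m hm (A m) = .a 1 := phi_of m hm 0
lemma phi_B : phi m hm (B m) = .xa 0 := phi_of m hm 1

lemma h2 : (phi m hm).comp (psi m hm) = MonoidHom.id (QuaternionGroup m) := by
  haveI : NeZero (2 * m) := ⟨by omega⟩
  apply MonoidHom.ext
  rintro (i | i)
  · show phi m hm (pi m i) = .a i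
    rw [pi_def, map_pow, phi_A, QuaternionGroup.a_one_pow, ZMod.natCast_rightInverse i]
  · show phi m hm (B m * pi m i) = .xa i
    rw [map_mul, pi_def, map_pow, phi_A, phi_B, QuaternionGroup.a_one_pow,
      QuaternionGroup.xa_mul_a, zero_add, ZMod.natCast_rightInverse i]

include hm in
theorem main : Nonempty (P m ≃* QuaternionGroup m) :=
  ⟨MonoidHom.toMulEquiv (phi m hm) (psi m hm) (h1 m hm) (h2 m hm)⟩

end Q4mAux

/-- for every integer `m ≥ 2` the group presented on `{x₁, x₂, x₃}` with
relators `x₁^{m-1} x₃⁻¹ x₂⁻¹`, `x₂ x₁⁻¹ x₃⁻¹`, `x₃ x₂⁻¹ x₁⁻¹` is isomorphic to the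
generalized quaternion (dicyclic) group `Q_{4m}`. -/
theorem presentedGroup_iso_quaternionGroup (m : ℕ) (hm : 2 ≤ m) :
    Nonempty (PresentedGroup (q4mRels m) ≃* QuaternionGroup m) := by
  exact Q4mAux.main m hm
end

section
/- The group presented on generators {x₁, x₂} with relators x₁⁴x₂^{−1}x₁x₂^{−1}x₁⁴x₂^{−1}x₁x₂^{−3}x₁x₂^{−1} and x₁³x₂²x₁³x₂^{−1}x₁x₂^{−1}x₁⁴x₂^{−1}x₁x₂^{−1} is isomorphic to the group presented on generators {x₁, x₂} with relators x₁x₂³x₁x₂x₁⁴x₂x₁x₂x₁⁴x₂ and x₁x₂x₁x₂²x₁^{−3}x₂². -/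
private lemma mk_rel_one {α : Type*} {R : Set (FreeGroup α)} {r : FreeGroup α} (h : r ∈ R) :
    PresentedGroup.mk R r = 1 :=
  (QuotientGroup.eq_one_iff _).mpr (Subgroup.subset_normalClosure h)

/-- the group presented on {x₁, x₂} with relators
x₁⁴x₂⁻¹x₁x₂⁻¹x₁⁴x₂⁻¹x₁x₂⁻³x₁x₂⁻¹ and x₁³x₂²x₁³x₂⁻¹x₁x₂⁻¹x₁⁴x₂⁻¹x₁x₂⁻¹ is isomorphic to the
group presented on {x₁, x₂} with relators x₁x₂³x₁x₂x₁⁴x₂x₁x₂x₁⁴x₂ and x₁x₂x₁x₂²x₁⁻³x₂². -/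
theorem stmt13 :
    let x₁ : FreeGroup (Fin 2) := FreeGroup.of 0
    let x₂ : FreeGroup (Fin 2) := FreeGroup.of 1
    Nonempty (PresentedGroup
      ({ x₁ ^ 4 * x₂⁻¹ * x₁ * x₂⁻¹ * x₁ ^ 4 * x₂⁻¹ * x₁ * (x₂ ^ 3)⁻¹ * x₁ * x₂⁻¹,
         x₁ ^ 3 * x₂ ^ 2 * x₁ ^ 3 * x₂⁻¹ * x₁ * x₂⁻¹ * x₁ ^ 4 * x₂⁻¹ * x₁ * x₂⁻¹ } :
        Set (FreeGroup (Fin 2)))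
      ≃* PresentedGroup
      ({ x₁ * x₂ ^ 3 * x₁ * x₂ * x₁ ^ 4 * x₂ * x₁ * x₂ * x₁ ^ 4 * x₂,
         x₁ * x₂ * x₁ * x₂ ^ 2 * (x₁ ^ 3)⁻¹ * x₂ ^ 2 } : Set (FreeGroup (Fin 2)))) := by
  intro x₁ x₂
  set R₁ : Set (FreeGroup (Fin 2)) :=
    { x₁ ^ 4 * x₂⁻¹ * x₁ * x₂⁻¹ * x₁ ^ 4 * x₂⁻¹ * x₁ * (x₂ ^ 3)⁻¹ * x₁ * x₂⁻¹,
      x₁ ^ 3 * x₂ ^ 2 * x₁ ^ 3 * x₂⁻¹ * x₁ * x₂⁻¹ * x₁ ^ 4 * x₂⁻¹ * x₁ * x₂⁻¹ } with hR₁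
  set R₂ : Set (FreeGroup (Fin 2)) :=
    { x₁ * x₂ ^ 3 * x₁ * x₂ * x₁ ^ 4 * x₂ * x₁ * x₂ * x₁ ^ 4 * x₂,
      x₁ * x₂ * x₁ * x₂ ^ 2 * (x₁ ^ 3)⁻¹ * x₂ ^ 2 } with hR₂
  -- the substitution maps
  set f : Fin 2 → PresentedGroup R₂ :=
    fun i => if i = 0 then PresentedGroup.of 0 else (PresentedGroup.of 1)⁻¹ with hf
  set g : Fin 2 → PresentedGroup R₁ :=
    fun i => if i = 0 then PresentedGroup.of 0 else (PresentedGroup.of 1)⁻¹ with hg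
  have ha2 : ∀ i : Fin 2, i = 0 ∨ i = 1 := by decide
  have hx1 : x₁ = FreeGroup.of 0 := rfl
  have hx2 : x₂ = FreeGroup.of 1 := rfl
  -- relations in the target groups
  have h1 : (PresentedGroup.of 0 : PresentedGroup R₂) * (PresentedGroup.of 1)^3 *
      PresentedGroup.of 0 * PresentedGroup.of 1 * (PresentedGroup.of 0)^4 *
      PresentedGroup.of 1 * PresentedGroup.of 0 * PresentedGroup.of 1 *
      (PresentedGroup.of 0)^4 * PresentedGroup.of 1 = 1 := by
    have := mk_rel_one (R := R₂)
      (r := x₁ * x₂ ^ 3 * x₁ * x₂ * x₁ ^ 4 * x₂ * x₁ * x₂ * x₁ ^ 4 * x₂) (by left; rfl)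
    simpa only [hx1, hx2, map_mul, map_pow, map_inv, ← PresentedGroup.of.eq_1] using this
  have h2 : (PresentedGroup.of 0 : PresentedGroup R₂) * PresentedGroup.of 1 *
      PresentedGroup.of 0 * (PresentedGroup.of 1)^2 * ((PresentedGroup.of 0)^3)⁻¹ *
      (PresentedGroup.of 1)^2 = 1 := by
    have := mk_rel_one (R := R₂)
      (r := x₁ * x₂ * x₁ * x₂ ^ 2 * (x₁ ^ 3)⁻¹ * x₂ ^ 2) (by right; rfl)
    simpa only [hx1, hx2, map_mul, map_pow, map_inv, ← PresentedGroup.of.eq_1] using this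
  have k1 : (PresentedGroup.of 0 : PresentedGroup R₁)^4 * (PresentedGroup.of 1)⁻¹ *
      PresentedGroup.of 0 * (PresentedGroup.of 1)⁻¹ * (PresentedGroup.of 0)^4 *
      (PresentedGroup.of 1)⁻¹ * PresentedGroup.of 0 * ((PresentedGroup.of 1)^3)⁻¹ *
      PresentedGroup.of 0 * (PresentedGroup.of 1)⁻¹ = 1 := by
    have := mk_rel_one (R := R₁)
      (r := x₁ ^ 4 * x₂⁻¹ * x₁ * x₂⁻¹ * x₁ ^ 4 * x₂⁻¹ * x₁ * (x₂ ^ 3)⁻¹ * x₁ * x₂⁻¹)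
      (by left; rfl)
    simpa only [hx1, hx2, map_mul, map_pow, map_inv, ← PresentedGroup.of.eq_1] using this
  have k2 : (PresentedGroup.of 0 : PresentedGroup R₁)^3 * (PresentedGroup.of 1)^2 *
      (PresentedGroup.of 0)^3 * (PresentedGroup.of 1)⁻¹ * PresentedGroup.of 0 *
      (PresentedGroup.of 1)⁻¹ * (PresentedGroup.of 0)^4 * (PresentedGroup.of 1)⁻¹ *
      PresentedGroup.of 0 * (PresentedGroup.of 1)⁻¹ = 1 := by
    have := mk_rel_one (R := R₁)
      (r := x₁ ^ 3 * x₂ ^ 2 * x₁ ^ 3 * x₂⁻¹ * x₁ * x₂⁻¹ * x₁ ^ 4 * x₂⁻¹ * x₁ * x₂⁻¹)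
      (by right; rfl)
    simpa only [hx1, hx2, map_mul, map_pow, map_inv, ← PresentedGroup.of.eq_1] using this
  have hfcond : ∀ r ∈ R₁, FreeGroup.lift f r = 1 := by
    rintro r (rfl | rfl) <;>
      simp only [hx1, hx2, map_mul, map_pow, map_inv, FreeGroup.lift_apply_of, hf, if_pos rfl,
        reduceIte, inv_inv]
    · set a := (PresentedGroup.of 0 : PresentedGroup R₂)
      set b := (PresentedGroup.of 1 : PresentedGroup R₂)
      show a^4*b*a*b*a^4*b*a*b^3*a*b = 1
      calc a^4*b*a*b*a^4*b*a*b^3*a*b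
          = (a*b^3*a*b)⁻¹ * (a*b^3*a*b*a^4*b*a*b*a^4*b) * (a*b^3*a*b) := by group
        _ = 1 := by rw [h1]; group
    · set a := (PresentedGroup.of 0 : PresentedGroup R₂)
      set b := (PresentedGroup.of 1 : PresentedGroup R₂)
      show a^3*(b⁻¹)^2*a^3*b*a*b*a^4*b*a*b = 1
      calc a^3*(b⁻¹)^2*a^3*b*a*b*a^4*b*a*b
          = (a^3 * (a*b*a*b^2*(a^3)⁻¹*b^2)⁻¹ * (a^3)⁻¹) *
            ((a^4*b) * (a*b^3*a*b*a^4*b*a*b*a^4*b) * (a^4*b)⁻¹) := by group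
        _ = 1 := by rw [h1, h2]; group
  have hgcond : ∀ r ∈ R₂, FreeGroup.lift g r = 1 := by
    rintro r (rfl | rfl) <;>
      simp only [hx1, hx2, map_mul, map_pow, map_inv, FreeGroup.lift_apply_of, hg, if_pos rfl,
        reduceIte, inv_inv]
    · set a := (PresentedGroup.of 0 : PresentedGroup R₁)
      set b := (PresentedGroup.of 1 : PresentedGroup R₁)
      show a*(b⁻¹)^3*a*b⁻¹*a^4*b⁻¹*a*b⁻¹*a^4*b⁻¹ = 1
      calc a*(b⁻¹)^3*a*b⁻¹*a^4*b⁻¹*a*b⁻¹*a^4*b⁻¹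
          = (a^4*b⁻¹*a*b⁻¹*a^4*b⁻¹)⁻¹ *
            (a^4*b⁻¹*a*b⁻¹*a^4*b⁻¹*a*(b^3)⁻¹*a*b⁻¹) * (a^4*b⁻¹*a*b⁻¹*a^4*b⁻¹) := by group
        _ = 1 := by rw [k1]; group
    · set a := (PresentedGroup.of 0 : PresentedGroup R₁)
      set b := (PresentedGroup.of 1 : PresentedGroup R₁)
      show a*b⁻¹*a*(b⁻¹)^2*(a^3)⁻¹*(b⁻¹)^2 = 1
      calc a*b⁻¹*a*(b⁻¹)^2*(a^3)⁻¹*(b⁻¹)^2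
          = (a*b⁻¹*a*b⁻¹^3*a*b⁻¹) * (a^4*b⁻¹*a*b⁻¹*a^4*b⁻¹*a*(b^3)⁻¹*a*b⁻¹) *
            (b*a⁻¹*b^3*a⁻¹*b*a⁻¹^4) *
            (a^3*b^2*a^3*b⁻¹*a*b⁻¹*a^4*b⁻¹*a*b⁻¹)⁻¹ * a^3 := by group
        _ = 1 := by rw [k1, k2]; group
  refine ⟨MonoidHom.toMulEquiv (PresentedGroup.toGroup hfcond) (PresentedGroup.toGroup hgcond)
    ?_ ?_⟩ <;>
  · ext i
    rcases ha2 i with rfl | rfl <;>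
      simp [PresentedGroup.toGroup.of, hf, hg]
end

section
/- Let R = {x₁³x₂^{−1}, x₁³x₂} in the free group F({x₁, x₂}). Then w₀ = x₂² belongs to \overline{R}, λ(w₀) ≤ λ(w) for every w ∈ \overline{R}, and every w ∈ \overline{R} with λ(w) = λ(w₀) satisfies N({w}) = N({w₀}). Moreover, the group presented on {x₁, x₂} with relators x₁³x₂^{−1} and x₁³x₂ is isomorphic to the cyclic group ℤ₆. -/
namespace Paper

variable {α : Type*}

/-- Number of adjacent unequal pairs in a list of booleans. -/
def adjChanges : List Bool → ℕ
  | a :: b :: l => (if a ≠ b then 1 else 0) + adjChanges (b :: l)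
  | _ => 0

/-- Number of cyclic sign changes of a (cyclic) sequence of signs. -/
def cyclicChanges : List Bool → ℕ
  | [] => 0
  | a :: l => adjChanges ((a :: l) ++ [a])

/-- Cyclic reduction of a reduced word: repeatedly strip the first letter
together with the last one when they are inverse to each other. -/
def cyclicReduce [DecidableEq α] : List (α × Bool) → List (α × Bool)
  | [] => []
  | a :: l =>
    if l.getLast? = some (a.1, !a.2) then cyclicReduce l.dropLast
    else a :: l
  termination_by l => l.length
  decreasing_by
    simp [List.length_dropLast]
    try omega

/-- The weight λ(w) of an element of a free group: 2 for the identity, and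
`2 m - t` for a word with cyclically reduced length `m` and `t` cyclic sign
changes. -/
noncomputable def weight (w : FreeGroup α) : ℕ :=
  letI := Classical.decEq α
  let l := cyclicReduce w.toWord
  if l.length = 0 then 2 else 2 * l.length - cyclicChanges (l.map Prod.snd)

/-- `overline R`: the set of `w` in the normal closure of `R` such that replacing any
single relator of `R` by `w` does not change the normal closure. -/
def overline (R : Set (FreeGroup α)) : Set (FreeGroup α) :=
  {w | w ∈ Subgroup.normalClosure R ∧
    ∀ r ∈ R, Subgroup.normalClosure ((R \ {r}) ∪ {w}) = Subgroup.normalClosure R}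

end Paper

namespace Stmt15Aux
open Paper FreeGroup Subgroup

abbrev F2 := FreeGroup (Fin 2)
def X1 : F2 := FreeGroup.of 0
def X2 : F2 := FreeGroup.of 1
def Rset : Set F2 := {X1 ^ 3 * X2⁻¹, X1 ^ 3 * X2}

/-! ### combinatorial lemmas -/

theorem adj_le : ∀ (l : List Bool) (a : Bool), adjChanges (a :: l) ≤ l.length
  | [], _ => le_refl _
  | b :: l, a => by
    rw [adjChanges]
    have := adj_le l b
    simp only [List.length_cons]
    split <;> omega

theorem cyclicChanges_le (l : List Bool) : cyclicChanges l ≤ l.length := by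
  cases l with
  | nil => simp [cyclicChanges]
  | cons a l =>
    have := adj_le (l ++ [a]) a
    rw [cyclicChanges]
    simpa using this

theorem inv_single {α : Type*} (p : α × Bool) :
    FreeGroup.mk [(p.1, !p.2)] = (FreeGroup.mk [p])⁻¹ := by
  rw [FreeGroup.inv_mk]; simp [FreeGroup.invRev]

theorem mk_pair_inv {α : Type*} (p : α × Bool) : FreeGroup.mk [p, (p.1, !p.2)] = 1 := by
  have : ([p, (p.1,!p.2)] : List (α × Bool)) = [p] ++ [(p.1,!p.2)] := rfl
  rw [this, ← FreeGroup.mul_mk, inv_single, mul_inv_cancel]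

theorem mk_conj {α : Type*} [DecidableEq α] (l : List (α × Bool)) :
    ∃ u : FreeGroup α, FreeGroup.mk l = u * FreeGroup.mk (cyclicReduce l) * u⁻¹ := by
  induction l using Paper.cyclicReduce.induct with
  | case1 => exact ⟨1, by simp [cyclicReduce]⟩
  | case2 a l h ih =>
    rw [cyclicReduce, if_pos h]
    obtain ⟨u, hu⟩ := ih
    refine ⟨FreeGroup.mk [a] * u, ?_⟩
    have hl : l = l.dropLast ++ [(a.1, !a.2)] := by
      rcases List.getLast?_eq_some_iff.mp h with ⟨l', hl'⟩
      simp [hl']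
    have hcons : (a :: l : List (α × Bool)) = [a] ++ l.dropLast ++ [(a.1,!a.2)] := by
      rw [List.append_assoc]; exact congrArg (a :: ·) hl |>.trans rfl
    rw [hcons, ← FreeGroup.mul_mk, ← FreeGroup.mul_mk, inv_single, hu]
    group
  | case3 a l h =>
    rw [cyclicReduce, if_neg h]
    exact ⟨1, by simp⟩

/-! ### homomorphism computations -/

def v6 (p : Fin 2 × Bool) : ZMod 6 :=
  cond p.2 (if p.1 = 0 then 1 else 3) (-(if p.1 = 0 then 1 else 3))

theorem lift_mk_ofAdd {A : Type*} [AddCommGroup A] (v : Fin 2 → A) (L : List (Fin 2 × Bool)) :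
    FreeGroup.lift (fun i => Multiplicative.ofAdd (v i)) (FreeGroup.mk L) =
      Multiplicative.ofAdd ((L.map fun p => cond p.2 (v p.1) (-v p.1)).sum) := by
  rw [FreeGroup.lift_mk]
  induction L with
  | nil => simp
  | cons a L ih =>
    simp only [List.map_cons, List.prod_cons, List.sum_cons, ih, ofAdd_add]
    cases h : a.2 <;> simp [h, ofAdd_neg]

def φ6 : F2 →* Multiplicative (ZMod 6) :=
  FreeGroup.lift fun i => Multiplicative.ofAdd (if i = 0 then 1 else 3)

theorem φ6_mk (L : List (Fin 2 × Bool)) :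
    φ6 (FreeGroup.mk L) = Multiplicative.ofAdd ((L.map v6).sum) := by
  rw [φ6, lift_mk_ofAdd]
  have : (L.map fun p => cond p.2 (if p.1 = 0 then (1:ZMod 6) else 3)
      (-(if p.1 = 0 then 1 else 3))) = L.map v6 :=
    List.map_congr_left fun p _ => by cases h : p.2 <;> simp [v6, h]
  rw [this]

def φ2 : F2 →* Multiplicative (ZMod 2) :=
  FreeGroup.lift fun _ => Multiplicative.ofAdd 1

theorem φ2_mk (L : List (Fin 2 × Bool)) :
    φ2 (FreeGroup.mk L) = Multiplicative.ofAdd ((L.length : ZMod 2)) := by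
  rw [φ2, lift_mk_ofAdd]
  congr 1
  induction L with
  | nil => simp
  | cons a L ih =>
    simp only [List.map_cons, List.sum_cons, ih, List.length_cons]
    have h2 : ((L.length + 1 : ℕ) : ZMod 2) = 1 + (L.length : ZMod 2) := by push_cast; ring
    rw [h2]
    cases h : a.2
    · show (-1 : ZMod 2) + _ = _
      have : (-1 : ZMod 2) = 1 := by decide
      rw [this]
    · rfl

def ψ : F2 →* Multiplicative ℤ :=
  FreeGroup.lift fun i => Multiplicative.ofAdd (if i = 0 then 1 else -3)

theorem φ6_of (i : Fin 2) : φ6 (FreeGroup.of i) = Multiplicative.ofAdd (if i = 0 then 1 else 3) :=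
  FreeGroup.lift_apply_of

theorem N_le_ker6 : Subgroup.normalClosure Rset ≤ φ6.ker := by
  apply Subgroup.normalClosure_le_normal
  rintro x (rfl | rfl) <;> rw [SetLike.mem_coe, MonoidHom.mem_ker]
  · rw [X1, X2, _root_.map_mul, _root_.map_pow, _root_.map_inv, φ6_of, φ6_of]; decide
  · rw [X1, X2, _root_.map_mul, _root_.map_pow, φ6_of, φ6_of]; decide

theorem N_ψ_r2 : Subgroup.normalClosure {X1 ^ 3 * X2} ≤ ψ.ker := by
  apply Subgroup.normalClosure_le_normal
  rintro x rfl
  rw [SetLike.mem_coe, MonoidHom.mem_ker, X1, X2, _root_.map_mul, _root_.map_pow, ψ,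
    FreeGroup.lift_apply_of, FreeGroup.lift_apply_of]
  simp only [reduceIte, if_neg (by decide : ¬(1:Fin 2) = 0), ← ofAdd_nsmul, ← ofAdd_add]
  norm_num


/-! ### case analysis lemmas -/

theorem two_case : ∀ p q : Fin 2 × Bool, ([p,q].map v6).sum = 0 →
    (q = (p.1, !p.2)) ∨ ([p,q] = [((1:Fin 2),true), (1,true)]) ∨
      ([p,q] = [((1:Fin 2),false), (1,false)]) := by decide

theorem alt4 : ∀ a b c d : Bool, cyclicChanges [a,b,c,d] = 4 →
    a = !b ∧ b = !c ∧ c = !d := by decide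

theorem four_case : ∀ p q r s : Fin 2 × Bool,
    ([p,q,r,s].map v6).sum = 0 → (p.2 = !q.2 ∧ q.2 = !r.2 ∧ r.2 = !s.2) →
    ([q,s] = [(p.1,!p.2),(r.1,!r.2)] ∨ [r,s] = [(q.1,!q.2),(p.1,!p.2)]) := by decide

theorem mk_four_a {α : Type*} (p r : α × Bool) :
    FreeGroup.mk [p, (p.1,!p.2), r, (r.1,!r.2)] = 1 := by
  have : ([p, (p.1,!p.2), r, (r.1,!r.2)] : List (α × Bool)) =
      [p, (p.1,!p.2)] ++ [r, (r.1,!r.2)] := rfl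
  rw [this, ← FreeGroup.mul_mk, mk_pair_inv, mk_pair_inv, mul_one]

theorem mk_four_b {α : Type*} (p q : α × Bool) :
    FreeGroup.mk [p, q, (q.1,!q.2), (p.1,!p.2)] = 1 := by
  have : ([p, q, (q.1,!q.2), (p.1,!p.2)] : List (α × Bool)) =
      [p] ++ ([q, (q.1,!q.2)] ++ [(p.1,!p.2)]) := rfl
  rw [this, ← FreeGroup.mul_mk, ← FreeGroup.mul_mk, mk_pair_inv, one_mul, inv_single,
    mul_inv_cancel]

/-! ### normal closure manipulations -/

set_option maxHeartbeats 1000000 in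
theorem ncl_conj (u g : F2) :
    Subgroup.normalClosure {u * g * u⁻¹} = Subgroup.normalClosure {g} := by
  apply le_antisymm
  · apply Subgroup.normalClosure_le_normal
    rw [Set.singleton_subset_iff, SetLike.mem_coe]
    exact Subgroup.Normal.conj_mem (Subgroup.normalClosure_normal) _
      (Subgroup.subset_normalClosure (Set.mem_singleton g)) u
  · apply Subgroup.normalClosure_le_normal
    rw [Set.singleton_subset_iff, SetLike.mem_coe]
    have := Subgroup.Normal.conj_mem (Subgroup.normalClosure_normal) _
      (Subgroup.subset_normalClosure (Set.mem_singleton (u * g * u⁻¹))) u⁻¹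
    simpa [mul_assoc] using this

set_option maxHeartbeats 1000000 in
theorem ncl_inv (g : F2) :
    Subgroup.normalClosure {g⁻¹} = Subgroup.normalClosure {g} := by
  apply le_antisymm
  · apply Subgroup.normalClosure_le_normal
    rw [Set.singleton_subset_iff, SetLike.mem_coe]
    exact inv_mem (Subgroup.subset_normalClosure (Set.mem_singleton g))
  · apply Subgroup.normalClosure_le_normal
    rw [Set.singleton_subset_iff, SetLike.mem_coe]
    simpa using inv_mem (Subgroup.subset_normalClosure (Set.mem_singleton (g⁻¹)))

set_option maxHeartbeats 1000000 in
theorem ncl_union_one (s : Set F2) :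
    Subgroup.normalClosure (s ∪ {1}) = Subgroup.normalClosure s := by
  apply le_antisymm
  · apply Subgroup.normalClosure_le_normal
    rintro x (hx | rfl)
    · exact Subgroup.subset_normalClosure hx
    · exact one_mem _
  · exact Subgroup.normalClosure_mono Set.subset_union_left

/-! ### membership facts -/

theorem r1_ne_r2 : X1 ^ 3 * X2⁻¹ ≠ X1 ^ 3 * X2 := by
  rw [X1, X2]; decide

theorem w0_mem : X2 ^ 2 ∈ Subgroup.normalClosure Rset := by
  haveI : (Subgroup.normalClosure Rset).Normal := Subgroup.normalClosure_normal
  have h1 : X1 ^ 3 * X2 ∈ Subgroup.normalClosure Rset :=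
    Subgroup.subset_normalClosure (Set.mem_insert_iff.mpr (Or.inr rfl))
  have h2 : X1 ^ 3 * X2⁻¹ ∈ Subgroup.normalClosure Rset :=
    Subgroup.subset_normalClosure (Set.mem_insert _ _)
  have m1 := this.conj_mem _ h1 (X1⁻¹ ^ 3)
  have m2 := this.conj_mem _ (inv_mem h2) (X1⁻¹ ^ 3)
  have := mul_mem m1 m2
  have he : X2 ^ 2 = (X1⁻¹ ^ 3 * (X1 ^ 3 * X2) * (X1⁻¹ ^ 3)⁻¹) *
      (X1⁻¹ ^ 3 * (X1 ^ 3 * X2⁻¹)⁻¹ * (X1⁻¹ ^ 3)⁻¹) := by rw [pow_two]; group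
  rw [he]; exact this

theorem N_le_ker2 : Subgroup.normalClosure Rset ≤ φ2.ker := by
  apply Subgroup.normalClosure_le_normal
  rintro x (rfl | rfl) <;> rw [SetLike.mem_coe, MonoidHom.mem_ker]
  · rw [X1, X2, _root_.map_mul, _root_.map_pow, _root_.map_inv, φ2, FreeGroup.lift_apply_of,
      FreeGroup.lift_apply_of]; decide
  · rw [X1, X2, _root_.map_mul, _root_.map_pow, φ2, FreeGroup.lift_apply_of, FreeGroup.lift_apply_of]; decide

set_option maxHeartbeats 1000000 in
theorem w0_overline : X2 ^ 2 ∈ Paper.overline Rset := by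
  refine ⟨w0_mem, ?_⟩
  haveI : (Subgroup.normalClosure Rset).Normal := Subgroup.normalClosure_normal
  rintro r (rfl | rfl)
  · rw [show Rset \ {X1 ^ 3 * X2⁻¹} = {X1 ^ 3 * X2} from Set.pair_diff_left r1_ne_r2]
    apply le_antisymm
    · apply Subgroup.normalClosure_le_normal
      rintro x (rfl | rfl)
      · exact Subgroup.subset_normalClosure (Set.mem_insert_iff.mpr (Or.inr rfl))
      · exact w0_mem
    · apply Subgroup.normalClosure_le_normal
      rintro x (rfl | rfl)
      · have h1 : X1 ^ 3 * X2 ∈ Subgroup.normalClosure ({X1 ^ 3 * X2} ∪ {X2 ^ 2}) :=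
          Subgroup.subset_normalClosure (Or.inl rfl)
        have h2 : X2 ^ 2 ∈ Subgroup.normalClosure ({X1 ^ 3 * X2} ∪ {X2 ^ 2}) :=
          Subgroup.subset_normalClosure (Or.inr rfl)
        have he : X1 ^ 3 * X2⁻¹ = (X1 ^ 3 * X2) * (X2 ^ 2)⁻¹ := by
          rw [pow_two]; group
        rw [SetLike.mem_coe, he]
        exact mul_mem h1 (inv_mem h2)
      · exact Subgroup.subset_normalClosure (Or.inl rfl)
  · rw [show Rset \ {X1 ^ 3 * X2} = {X1 ^ 3 * X2⁻¹} from Set.pair_diff_right r1_ne_r2]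
    apply le_antisymm
    · apply Subgroup.normalClosure_le_normal
      rintro x (rfl | rfl)
      · exact Subgroup.subset_normalClosure (Set.mem_insert _ _)
      · exact w0_mem
    · apply Subgroup.normalClosure_le_normal
      rintro x (rfl | rfl)
      · exact Subgroup.subset_normalClosure (Or.inl rfl)
      · have h1 : X1 ^ 3 * X2⁻¹ ∈ Subgroup.normalClosure ({X1 ^ 3 * X2⁻¹} ∪ {X2 ^ 2}) :=
          Subgroup.subset_normalClosure (Or.inl rfl)
        have h2 : X2 ^ 2 ∈ Subgroup.normalClosure ({X1 ^ 3 * X2⁻¹} ∪ {X2 ^ 2}) :=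
          Subgroup.subset_normalClosure (Or.inr rfl)
        have he : X1 ^ 3 * X2 = (X1 ^ 3 * X2⁻¹) * X2 ^ 2 := by
          rw [pow_two]; group
        rw [SetLike.mem_coe, he]
        exact mul_mem h1 h2

theorem not_one_overline : (1 : F2) ∉ Paper.overline Rset := by
  intro h
  have h1 := h.2 (X1 ^ 3 * X2⁻¹) (Set.mem_insert _ _)
  rw [show Rset \ {X1 ^ 3 * X2⁻¹} = {X1 ^ 3 * X2} from Set.pair_diff_left r1_ne_r2,
    ncl_union_one] at h1
  have hmem : X2 ^ 2 ∈ Subgroup.normalClosure {X1 ^ 3 * X2} := h1 ▸ w0_mem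
  have := N_ψ_r2 hmem
  rw [MonoidHom.mem_ker, _root_.map_pow, X2, ψ, FreeGroup.lift_apply_of,
    if_neg (by decide : ¬(1:Fin 2) = 0)] at this
  rw [← ofAdd_nsmul] at this
  have : ((2 : ℕ) • (-3 : ℤ)) = 0 := by
    have := ofAdd_eq_one.mp this
    exact this
  norm_num at this

theorem instEq : (Classical.decEq (Fin 2)) = (instDecidableEqFin 2) := Subsingleton.elim _ _

theorem weight_eq (w : F2) : Paper.weight w =
    (if (@cyclicReduce (Fin 2) (instDecidableEqFin 2)
          (@FreeGroup.toWord (Fin 2) (instDecidableEqFin 2) w)).length = 0 then 2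
     else 2 * (@cyclicReduce (Fin 2) (instDecidableEqFin 2)
          (@FreeGroup.toWord (Fin 2) (instDecidableEqFin 2) w)).length -
       cyclicChanges ((@cyclicReduce (Fin 2) (instDecidableEqFin 2)
          (@FreeGroup.toWord (Fin 2) (instDecidableEqFin 2) w)).map Prod.snd)) := by
  unfold Paper.weight
  rw [instEq]

theorem toWord_w0 :
    @FreeGroup.toWord (Fin 2) (instDecidableEqFin 2) (FreeGroup.of 1 ^ 2) =
      [(1,true),(1,true)] := by decide

theorem cycred_w0 : @cyclicReduce (Fin 2) (instDecidableEqFin 2) [((1:Fin 2),true),(1,true)] =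
    [(1,true),(1,true)] := by
  rw [cyclicReduce, if_neg (by decide)]

theorem weight_w0 : Paper.weight (X2 ^ 2) = 4 := by
  rw [weight_eq, X2, toWord_w0, cycred_w0]
  decide

set_option maxHeartbeats 2000000 in
theorem main_lemma (w : F2) (hw : w ∈ Paper.overline Rset) :
    4 ≤ Paper.weight w ∧
      (Paper.weight w = 4 →
        Subgroup.normalClosure {w} = Subgroup.normalClosure {X2 ^ 2}) := by
  have hw1 : w ≠ 1 := fun h => not_one_overline (h ▸ hw)
  obtain ⟨c, hc⟩ : ∃ c, c = @cyclicReduce (Fin 2) (instDecidableEqFin 2)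
      (@FreeGroup.toWord (Fin 2) (instDecidableEqFin 2) w) := ⟨_, rfl⟩
  obtain ⟨u, hu⟩ := @mk_conj (Fin 2) (instDecidableEqFin 2)
    (@FreeGroup.toWord (Fin 2) (instDecidableEqFin 2) w)
  rw [← hc] at hu
  have hwc : w = u * FreeGroup.mk c * u⁻¹ := by
    conv_lhs => rw [← @FreeGroup.mk_toWord (Fin 2) (instDecidableEqFin 2) w]
    rw [hu]
  have hmkc : FreeGroup.mk c ≠ 1 := by
    intro h
    apply hw1
    rw [hwc, h, mul_one, mul_inv_cancel]
  have hcne : c ≠ [] := by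
    intro h
    apply hmkc
    rw [h, ← FreeGroup.one_eq_mk]
  have habel : ∀ (M : Type) (inst : CommGroup M) (φ : F2 →* M), φ w = φ (FreeGroup.mk c) := by
    intro M inst φ
    rw [hwc, _root_.map_mul, _root_.map_mul, _root_.map_inv, mul_comm (φ u), mul_assoc,
      mul_inv_cancel, mul_one]
  have h6 : ((c.map v6).sum) = 0 := by
    have hker : φ6 w = 1 := N_le_ker6 hw.1
    rw [habel _ _ φ6, φ6_mk] at hker
    exact ofAdd_eq_one.mp hker
  have h2 : 2 ∣ c.length := by
    have hker : φ2 w = 1 := N_le_ker2 hw.1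
    rw [habel _ _ φ2, φ2_mk] at hker
    have := ofAdd_eq_one.mp hker
    exact (ZMod.natCast_eq_zero_iff _ _).mp this
  have hwt : Paper.weight w = 2 * c.length - cyclicChanges (c.map Prod.snd) := by
    rw [weight_eq, ← hc, if_neg (by simpa using hcne)]
  have ht : cyclicChanges (c.map Prod.snd) ≤ c.length := by
    simpa using cyclicChanges_le (c.map Prod.snd)
  -- case on the length of c
  rcases Nat.lt_or_ge c.length 4 with hlt | hge
  · -- length must be 2
    have hlen : c.length = 2 := by
      rcases h2 with ⟨k, hk⟩
      have : c.length ≠ 0 := by simpa using hcne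
      omega
    obtain ⟨p, q, rfl⟩ := List.length_eq_two.mp hlen
    rcases two_case p q h6 with hpq | hpq | hpq
    · exact absurd (hpq ▸ mk_pair_inv p) hmkc
    · rw [hpq] at hwt
      have hmk : FreeGroup.mk [((1:Fin 2),true),(1,true)] = X2 ^ 2 := by
        rw [X2]; decide
      constructor
      · rw [hwt]; decide
      · intro _
        rw [hwc, hpq, hmk, ncl_conj]
    · rw [hpq] at hwt
      have hmk : FreeGroup.mk [((1:Fin 2),false),(1,false)] = (X2 ^ 2)⁻¹ := by
        rw [X2]; decide
      constructor
      · rw [hwt]; decide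
      · intro _
        rw [hwc, hpq, hmk, ncl_conj, ncl_inv]
  · constructor
    · omega
    · intro h4
      exfalso
      have hlen : c.length = 4 ∧ cyclicChanges (c.map Prod.snd) = 4 := by omega
      obtain ⟨hl4, ht4⟩ := hlen
      rcases c with _ | ⟨p, c⟩
      · simp at hl4
      rcases c with _ | ⟨q, c⟩
      · simp at hl4
      rcases c with _ | ⟨r, c⟩
      · simp at hl4
      rcases c with _ | ⟨s, c⟩
      · simp at hl4
      have hnil : c = [] := by
        simp only [List.length_cons] at hl4
        exact List.length_eq_zero_iff.mp (by omega)
      subst hnil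
      have halt := alt4 p.2 q.2 r.2 s.2 (by simpa using ht4)
      rcases four_case p q r s h6 ⟨halt.1, halt.2.1, halt.2.2⟩ with h | h
      · simp only [List.cons.injEq, and_true] at h
        exact hmkc (by rw [h.1, h.2]; exact mk_four_a p r)
      · simp only [List.cons.injEq, and_true] at h
        exact hmkc (by rw [h.1, h.2]; exact mk_four_b p q)

/-! ### the presented group is ℤ/6 -/

abbrev G6 := PresentedGroup Rset

theorem rels_killed : ∀ r ∈ Rset,
    FreeGroup.lift (fun i : Fin 2 => Multiplicative.ofAdd (if i = 0 then (1 : ZMod 6) else 3)) r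
      = 1 := by
  rintro r (rfl | rfl)
  · rw [X1, X2, _root_.map_mul, _root_.map_pow, _root_.map_inv, FreeGroup.lift_apply_of,
      FreeGroup.lift_apply_of]; decide
  · rw [X1, X2, _root_.map_mul, _root_.map_pow, FreeGroup.lift_apply_of, FreeGroup.lift_apply_of]; decide

def σ6 : G6 →* Multiplicative (ZMod 6) := PresentedGroup.toGroup rels_killed

def tgen : G6 := PresentedGroup.of 0

theorem tgen_pow_six : tgen ^ 6 = 1 := by
  have hmem : X1 ^ 6 ∈ Subgroup.normalClosure Rset := by
    haveI : (Subgroup.normalClosure Rset).Normal := Subgroup.normalClosure_normal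
    have h1 : X1 ^ 3 * X2⁻¹ ∈ Subgroup.normalClosure Rset :=
      Subgroup.subset_normalClosure (Set.mem_insert _ _)
    have h2 : X1 ^ 3 * X2 ∈ Subgroup.normalClosure Rset :=
      Subgroup.subset_normalClosure (Set.mem_insert_iff.mpr (Or.inr rfl))
    have m2 := this.conj_mem _ h2 (X1⁻¹ ^ 3)
    have := mul_mem h1 m2
    have he : X1 ^ 6 = (X1 ^ 3 * X2⁻¹) * (X1⁻¹ ^ 3 * (X1 ^ 3 * X2) * (X1⁻¹ ^ 3)⁻¹) := by group
    rw [he]; exact this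
  have : tgen ^ 6 = PresentedGroup.mk Rset (X1 ^ 6) := by
    rw [tgen, PresentedGroup.of, ← _root_.map_pow, X1]
  rw [this]
  exact (QuotientGroup.eq_one_iff _).mpr hmem

theorem tgen_cube : tgen ^ 3 = PresentedGroup.of (rels := Rset) 1 := by
  have hmem : X1 ^ 3 * X2⁻¹ ∈ Subgroup.normalClosure Rset :=
    Subgroup.subset_normalClosure (Set.mem_insert _ _)
  have h1 : PresentedGroup.mk Rset (X1 ^ 3 * X2⁻¹) = 1 :=
    (QuotientGroup.eq_one_iff _).mpr hmem
  rw [_root_.map_mul, _root_.map_pow, _root_.map_inv] at h1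
  have := mul_inv_eq_one.mp h1
  rw [tgen, PresentedGroup.of, PresentedGroup.of, ← X1, ← X2]
  exact this

def fZ : ℤ →+ Additive G6 := MonoidHom.toAdditiveRight (zpowersHom G6 tgen)

theorem fZ_six : fZ 6 = 0 := by
  have : fZ 6 = Additive.ofMul (tgen ^ (6:ℤ)) := rfl
  rw [this]
  rw [show ((6:ℤ)) = ((6:ℕ) : ℤ) by norm_num, zpow_natCast, tgen_pow_six]
  rfl

def τ6 : Multiplicative (ZMod 6) →* G6 :=
  AddMonoidHom.toMultiplicativeLeft (ZMod.lift 6 ⟨fZ, fZ_six⟩)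

theorem τ6_int (m : ℤ) : τ6 (Multiplicative.ofAdd ((m : ZMod 6))) = tgen ^ m := by
  have : τ6 (Multiplicative.ofAdd ((m : ZMod 6))) =
      Additive.toMul (ZMod.lift 6 ⟨fZ, fZ_six⟩ ((m : ZMod 6))) := rfl
  rw [this, ZMod.lift_coe]
  rfl

theorem σ6_tgen : σ6 tgen = Multiplicative.ofAdd (1 : ZMod 6) := by
  rw [σ6, tgen]
  simpa using PresentedGroup.toGroup.of rels_killed (x := 0)

theorem στ : ∀ a, σ6 (τ6 a) = a := by
  intro a
  have ha : a = Multiplicative.ofAdd ((((a.toAdd.val : ℕ) : ℤ) : ZMod 6)) := by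
    push_cast
    rw [ZMod.natCast_val, ZMod.cast_id]
    rfl
  rw [ha, τ6_int, _root_.map_zpow, σ6_tgen]
  rw [show (((a.toAdd.val : ℕ) : ℤ)) = ((a.toAdd.val : ℕ) : ℤ) from rfl, zpow_natCast,
    ← ofAdd_nsmul]
  congr 1
  push_cast
  rw [nsmul_eq_mul, mul_one]

theorem τσ : ∀ g, τ6 (σ6 g) = g := by
  have hext : τ6.comp σ6 = MonoidHom.id G6 := by
    apply PresentedGroup.ext
    intro x
    fin_cases x
    · show τ6 (σ6 (PresentedGroup.of 0)) = PresentedGroup.of 0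
      rw [show (PresentedGroup.of (rels := Rset) 0) = tgen from rfl, σ6_tgen]
      have : Multiplicative.ofAdd ((1 : ZMod 6)) = Multiplicative.ofAdd (((1:ℤ) : ZMod 6)) := by
        norm_num
      rw [this, τ6_int, zpow_one]
    · show τ6 (σ6 (PresentedGroup.of 1)) = PresentedGroup.of 1
      have : σ6 (PresentedGroup.of (rels := Rset) 1) = Multiplicative.ofAdd ((3 : ZMod 6)) := by
        rw [σ6]
        simpa using PresentedGroup.toGroup.of rels_killed (x := 1)
      rw [this, show Multiplicative.ofAdd ((3 : ZMod 6)) =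
        Multiplicative.ofAdd (((3:ℤ) : ZMod 6)) by norm_num, τ6_int,
        show ((3:ℤ)) = ((3:ℕ) : ℤ) by norm_num, zpow_natCast, tgen_cube]
  intro g
  exact DFunLike.congr_fun hext g

def iso6 : G6 ≃* Multiplicative (ZMod 6) :=
  { toFun := σ6, invFun := τ6, left_inv := τσ, right_inv := στ, map_mul' := σ6.map_mul }

theorem part2 (w : F2) (hw : w ∈ Paper.overline Rset) :
    Paper.weight (X2 ^ 2) ≤ Paper.weight w := by
  rw [weight_w0]; exact (main_lemma w hw).1

theorem part3 (w : F2) (hw : w ∈ Paper.overline Rset)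
    (h : Paper.weight w = Paper.weight (X2 ^ 2)) :
    Subgroup.normalClosure {w} = Subgroup.normalClosure {X2 ^ 2} :=
  (main_lemma w hw).2 (by rw [h, weight_w0])

end Stmt15Aux


/-- for R = {x₁³x₂⁻¹, x₁³x₂}, the word w₀ = x₂² lies in overline R, has
minimal weight there, and is the unique such element up to normal closure; moreover the
group presented on {x₁, x₂} with relators x₁³x₂⁻¹ and x₁³x₂ is isomorphic to ℤ₆. -/
theorem stmt15 :
    let x₁ : FreeGroup (Fin 2) := FreeGroup.of 0
    let x₂ : FreeGroup (Fin 2) := FreeGroup.of 1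
    let R : Set (FreeGroup (Fin 2)) := {x₁ ^ 3 * x₂⁻¹, x₁ ^ 3 * x₂}
    let w₀ : FreeGroup (Fin 2) := x₂ ^ 2
    (w₀ ∈ Paper.overline R ∧
      (∀ w ∈ Paper.overline R, Paper.weight w₀ ≤ Paper.weight w) ∧
      (∀ w ∈ Paper.overline R, Paper.weight w = Paper.weight w₀ →
        Subgroup.normalClosure {w} = Subgroup.normalClosure {w₀})) ∧
    Nonempty (PresentedGroup R ≃* Multiplicative (ZMod 6)) := by
  exact ⟨⟨Stmt15Aux.w0_overline, Stmt15Aux.part2, Stmt15Aux.part3⟩, ⟨Stmt15Aux.iso6⟩⟩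
end
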